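/- arXiv:2210.11700 — 2 statements merged into one kernel-verified Lean document; each statement's English description precedes it below -/
import Mathlib

section
/- Let n ≥ 3, D_{2n} = ⟨a, b | a^n = b² = 1, a^b = a^{−1}⟩, and let Γ = Cay(D_{2n}, S) with A = Aut(Γ). Suppose R ≤ A is a regular subgroup isomorphic to D_{2n}. Then R is conjugate to R(D_{2n}) in A if and only if the unique cyclic subgroup of order n of R is conjugate to ⟨R(a)⟩ in A. -/
/-!
Here `a = r 1` and `b = sr 0`. Conjugating by `f` reduces the backward direction to: a subgroup
`P ≅ D_{2n}` of `Sym(D_{2n})` that contains `⟨R(a)⟩` and, by transitivity, some `p` with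
`p 1 = b` is `R(D_{2n})`. As `n ≥ 3`, `⟨R(a)⟩` is the rotation subgroup of `P`, so `p` is a
reflection of `P`: an involution inverting `R(a)`. Together with `p 1 = b` this pins `p` down to
`R(b)`, hence `R(D_{2n}) = ⟨R(a), R(b)⟩ ≤ P`, with equality by counting. For the forward
direction take `Z = f⁻¹ ⟨R(a)⟩ f`.
-/

/-- The Cayley digraph relation of `G` with connection set `S`:
there is an arc from `x` to `y` iff `y = s * x` for some `s ∈ S`. -/
def cayRel {G : Type*} [Group G] (S : Set G) : G → G → Prop :=
  fun x y => y * x⁻¹ ∈ S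

/-- The automorphism group of the Cayley digraph `Cay(G,S)`,
as a subgroup of the permutations of the vertex set `G`. -/
def cayAut {G : Type*} [Group G] (S : Set G) : Subgroup (Equiv.Perm G) where
  carrier := {f | ∀ x y, cayRel S (f x) (f y) ↔ cayRel S x y}
  one_mem' := by intro x y; rfl
  mul_mem' := by
    intro f g hf hg x y
    rw [Equiv.Perm.mul_apply, Equiv.Perm.mul_apply, hf, hg]
  inv_mem' := by
    intro f hf x y
    simpa [Equiv.Perm.inv_def] using (hf (f⁻¹ x) (f⁻¹ y)).symm

/-- `Cay(G,S)` is a CI-digraph: any isomorphic Cayley digraph `Cay(G,T)`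
is Cayley isomorphic to it. -/
def IsCIDigraph {G : Type*} [Group G] (S : Set G) : Prop :=
  ∀ T : Set G, (1 : G) ∉ T → Nonempty (cayRel S ≃r cayRel T) →
    ∃ α : G ≃* G, α '' S = T

/-- `G` has the `m`-DCI property: every Cayley digraph of `G` of out-valency `m`
is a CI-digraph. -/
def HasDCI (G : Type*) [Group G] (m : ℕ) : Prop :=
  ∀ S : Set G, (1 : G) ∉ S → S.ncard = m → IsCIDigraph S

/-- The right regular representation `R(G)` as a subgroup of `Perm G`. -/
def rightReg (G : Type*) [Group G] : Subgroup (Equiv.Perm G) where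
  carrier := Set.range fun g : G => Equiv.mulRight g
  one_mem' := ⟨1, by ext x; simp⟩
  mul_mem' := by
    rintro _ _ ⟨g, rfl⟩ ⟨h, rfl⟩
    exact ⟨h * g, by ext x; simp [mul_assoc]⟩
  inv_mem' := by
    rintro _ ⟨g, rfl⟩
    exact ⟨g⁻¹, by ext x; simp [Equiv.Perm.inv_def]⟩

/-- A subgroup of permutations of `V` is regular if for all `x y : V` there is a
unique element sending `x` to `y`. -/
def IsRegularSubgroup {V : Type*} (H : Subgroup (Equiv.Perm V)) : Prop :=
  ∀ x y : V, ∃! h : H, (h : Equiv.Perm V) x = y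

open DihedralGroup Subgroup

section MulRight

variable {G : Type*} [Group G]

theorem Equiv.mulRight_injective : Function.Injective (Equiv.mulRight : G → Equiv.Perm G) :=
  fun a b h => by simpa using congr($h 1)

theorem orderOf_mulRight (a : G) : orderOf (Equiv.mulRight a) = orderOf a :=
  orderOf_eq_orderOf_iff.mpr fun k => by
    rw [Equiv.pow_mulRight, ← Equiv.mulRight_one, Equiv.mulRight_injective.eq_iff]

theorem nat_card_rightReg : Nat.card (rightReg G) = Nat.card G :=
  Nat.card_range_of_injective Equiv.mulRight_injective

end MulRight

theorem IsRegularSubgroup.exists_mem_map_conj_apply_eq {V : Type*} {R : Subgroup (Equiv.Perm V)}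
    (hR : IsRegularSubgroup R) (f : Equiv.Perm V) (x y : V) :
    ∃ p ∈ R.map (MulAut.conj f).toMonoidHom, p x = y := by
  obtain ⟨h, hh, -⟩ := hR (f⁻¹ x) (f⁻¹ y)
  exact ⟨f * h * f⁻¹, mem_map_of_mem _ h.2, by
    rw [Equiv.Perm.mul_apply, Equiv.Perm.mul_apply, hh]
    exact f.apply_symm_apply y⟩

namespace DihedralGroup

variable {n : ℕ}

theorem r_mem_zpowers_r_one (i : ZMod n) : r i ∈ zpowers (r 1 : DihedralGroup n) :=
  ⟨i.cast, by simp⟩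

theorem sr_mul_r_mul_inv_sr (i j : ZMod n) : sr i * r j * (sr i)⁻¹ = (r j)⁻¹ := by
  rw [sr_mul_r, inv_sr, sr_mul_sr, inv_r]
  ring_nf

theorem eq_zpowers_r_one_of_isCyclic (hn : 3 ≤ n) {H : Subgroup (DihedralGroup n)} [IsCyclic H]
    (hH : Nat.card H = n) : H = zpowers (r 1) := by
  have : NeZero n := ⟨by omega⟩
  obtain ⟨g, rfl⟩ := (Subgroup.isCyclic_iff_exists_zpowers_eq_top H).mp ‹_›
  rw [Nat.card_zpowers] at hH
  cases g with
  | r i =>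
    refine eq_of_le_of_card_ge (zpowers_le.mpr (r_mem_zpowers_r_one i)) ?_
    rw [Nat.card_zpowers, Nat.card_zpowers, hH, orderOf_r_one]
  | sr i => rw [orderOf_sr] at hH; omega

theorem sq_eq_one_and_conj_eq_inv_of_notMem {G : Type*} [Group G] (hn : 3 ≤ n)
    {φ : DihedralGroup n →* G} (hφ : Function.Injective φ) {Z : Subgroup G} [IsCyclic Z]
    (hZ : Nat.card Z = n) (hZφ : Z ≤ φ.range) {x : G} (hxφ : x ∈ φ.range) (hxZ : x ∉ Z) :
    x ^ 2 = 1 ∧ ∀ z ∈ Z, x * z * x⁻¹ = z⁻¹ := by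
  have hmap : (Z.comap φ).map φ = Z := by rw [map_comap_eq, inf_eq_right.mpr hZφ]
  have : IsCyclic (Z.comap φ) :=
    isCyclic_of_injective (φ.subgroupComap Z) fun a b h => Subtype.ext (hφ congr(($h).1))
  have hrot : Z.comap φ = zpowers (r 1) := by
    apply eq_zpowers_r_one_of_isCyclic hn
    rw [← card_map_of_injective hφ, hmap, hZ]
  obtain ⟨y, rfl⟩ := hxφ
  obtain ⟨i, rfl⟩ : ∃ i, y = sr i := by
    cases y with
    | r j => exact absurd (hmap ▸ mem_map_of_mem φ (hrot ▸ r_mem_zpowers_r_one j)) hxZ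
    | sr i => exact ⟨i, rfl⟩
  refine ⟨by rw [← map_pow, sq, sr_mul_self, map_one], fun z hz => ?_⟩
  rw [← hmap, hrot] at hz
  obtain ⟨w, hw, rfl⟩ := hz
  obtain ⟨k, rfl⟩ := mem_zpowers_iff.mp hw
  rw [r_one_zpow, ← map_inv, ← map_mul, ← map_inv, ← map_mul, sr_mul_r_mul_inv_sr]

theorem mulRight_r_mem_zpowers (i : ZMod n) :
    Equiv.mulRight (r i) ∈ zpowers (Equiv.mulRight (r 1 : DihedralGroup n)) := by
  obtain ⟨k, hk⟩ := r_mem_zpowers_r_one i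
  exact ⟨k, by simp only [Equiv.zpow_mulRight, ← hk]⟩

theorem eq_mulRight_sr_zero {p : Equiv.Perm (DihedralGroup n)} (h1 : p 1 = sr 0)
    (hsq : p ^ 2 = 1)
    (hconj : ∀ i, p * Equiv.mulRight (r i) * p⁻¹ = (Equiv.mulRight (r i))⁻¹) :
    p = Equiv.mulRight (sr 0) := by
  have hr : ∀ i, p (r i) = sr (-i) := fun i => by
    simpa [h1, inv_r, sr_mul_r] using congr($(eq_mul_of_mul_inv_eq (hconj i)) 1)
  have hsr : ∀ i, p (sr i) = r (-i) := fun i => by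
    simpa [sq, hr] using congr($hsq (r (-i)))
  ext x
  cases x with
  | r i => simp [hr, r_mul_sr]
  | sr i => simp [hsr, sr_mul_sr]

theorem rightReg_le_of_mulRight_sr_zero_mem {P : Subgroup (Equiv.Perm (DihedralGroup n))}
    (hrot : zpowers (Equiv.mulRight (r 1)) ≤ P) (hsr : Equiv.mulRight (sr 0) ∈ P) :
    rightReg (DihedralGroup n) ≤ P := by
  rintro _ ⟨g, rfl⟩
  cases g with
  | r i => exact hrot (mulRight_r_mem_zpowers i)
  | sr i =>
    change Equiv.mulRight (sr i) ∈ P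
    rw [show sr i = sr 0 * r i by rw [sr_mul_r, zero_add], Equiv.mulRight_mul]
    exact P.mul_mem (hrot (mulRight_r_mem_zpowers i)) hsr

theorem eq_rightReg_of_zpowers_mulRight_le (hn : 3 ≤ n)
    {P : Subgroup (Equiv.Perm (DihedralGroup n))}
    (hP : Nonempty (P ≃* DihedralGroup n)) (hrot : zpowers (Equiv.mulRight (r 1)) ≤ P)
    {p : Equiv.Perm (DihedralGroup n)} (hpP : p ∈ P) (hp1 : p 1 = sr 0) :
    P = rightReg (DihedralGroup n) := by
  have : NeZero n := ⟨by omega⟩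
  obtain ⟨e⟩ := hP
  let φ : DihedralGroup n →* Equiv.Perm (DihedralGroup n) := P.subtype.comp e.symm.toMonoidHom
  have hφ : Function.Injective φ := P.subtype_injective.comp e.symm.injective
  have hrange : φ.range = P := by
    rw [MonoidHom.range_comp, MonoidHom.range_eq_top.mpr e.symm.surjective,
      ← MonoidHom.range_eq_map, range_subtype]
  have hpZ : p ∉ zpowers (Equiv.mulRight (r 1)) := by
    rintro ⟨k, rfl⟩
    simp [Equiv.zpow_mulRight] at hp1
  have hcard : Nat.card (zpowers (Equiv.mulRight (r 1 : DihedralGroup n))) = n := by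
    rw [Nat.card_zpowers, orderOf_mulRight, orderOf_r_one]
  obtain ⟨hsq, hconj⟩ :=
    sq_eq_one_and_conj_eq_inv_of_notMem hn hφ hcard (hrange ▸ hrot) (hrange ▸ hpP) hpZ
  have hb := eq_mulRight_sr_zero hp1 hsq fun i => hconj _ (mulRight_r_mem_zpowers i)
  refine (eq_of_le_of_card_ge (rightReg_le_of_mulRight_sr_zero_mem hrot (hb ▸ hpP)) ?_).symm
  rw [nat_card_rightReg, Nat.card_congr e.toEquiv]

end DihedralGroup

theorem stmt11_general (n : ℕ) (hn : 3 ≤ n) (S : Set (DihedralGroup n))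
    (R : Subgroup (Equiv.Perm (DihedralGroup n)))
    (hreg : IsRegularSubgroup R) (hiso : Nonempty (R ≃* DihedralGroup n)) :
    (∃ f ∈ cayAut S, R.map (MulAut.conj f).toMonoidHom = rightReg (DihedralGroup n)) ↔
    (∃ Z : Subgroup (Equiv.Perm (DihedralGroup n)), Z ≤ R ∧ IsCyclic Z ∧
      Nat.card Z = n ∧
      ∃ f ∈ cayAut S, Z.map (MulAut.conj f).toMonoidHom =
        Subgroup.zpowers (Equiv.mulRight (DihedralGroup.r (1 : ZMod n)))) := by
  constructor
  · rintro ⟨f, hf, hR⟩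
    set a := Equiv.mulRight (r (1 : ZMod n))
    have ha : a ∈ R.map (MulAut.conj f).toMonoidHom := hR ▸ ⟨r 1, rfl⟩
    refine ⟨zpowers ((MulAut.conj f).symm a), zpowers_le.mpr (mem_map_equiv.mp ha),
      inferInstance, ?_, f, hf, ?_⟩
    · rw [Nat.card_zpowers, MulEquiv.orderOf_eq, orderOf_mulRight, orderOf_r_one]
    · rw [MonoidHom.map_zpowers, MulEquiv.coe_toMonoidHom, MulEquiv.apply_symm_apply]
  · rintro ⟨Z, hZR, -, -, f, hf, hZ⟩
    obtain ⟨p, hp, hp1⟩ := hreg.exists_mem_map_conj_apply_eq f 1 (sr 0)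
    have hiso' : Nonempty (R.map (MulAut.conj f).toMonoidHom ≃* DihedralGroup n) :=
      ⟨(R.equivMapOfInjective _ (MulAut.conj f).injective).symm.trans hiso.some⟩
    exact ⟨f, hf, eq_rightReg_of_zpowers_mulRight_le hn hiso' (hZ ▸ map_mono hZR) hp hp1⟩

/-- For a regular subgroup `R ≅ D_{2n}` of `A = Aut(Cay(D_{2n},S))`,
`R` is conjugate to `R(D_{2n})` in `A` iff the unique cyclic subgroup of order `n`
of `R` is conjugate to `⟨R(a)⟩` in `A`. -/
theorem stmt11 (n : ℕ) (hn : 3 ≤ n) (S : Set (DihedralGroup n))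
    (R : Subgroup (Equiv.Perm (DihedralGroup n))) (hle : R ≤ cayAut S)
    (hreg : IsRegularSubgroup R) (hiso : Nonempty (R ≃* DihedralGroup n)) :
    (∃ f ∈ cayAut S, R.map (MulAut.conj f).toMonoidHom = rightReg (DihedralGroup n)) ↔
    (∃ Z : Subgroup (Equiv.Perm (DihedralGroup n)), Z ≤ R ∧ IsCyclic Z ∧
      Nat.card Z = n ∧
      ∃ f ∈ cayAut S, Z.map (MulAut.conj f).toMonoidHom =
        Subgroup.zpowers (Equiv.mulRight (DihedralGroup.r (1 : ZMod n)))) :=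
  stmt11_general n hn S R hreg hiso
end

section
/- All nilpotent Hall π-subgroups of a finite group are conjugate: if G is a finite group, π a set of primes, and H, K ≤ G are nilpotent Hall π-subgroups (i.e., |H| and |K| are π-numbers and their indices are π′-numbers), then H and K are conjugate in G. -/
/-!
Induction on `|G|`. Pick a prime `p ∈ π` dividing `|H|`. Since `p` does not divide the
indices, Sylow `p`-subgroups of `H` and of `K` are Sylow in `G`, so after conjugating `H`
they share a Sylow subgroup `R ≠ 1`, which is normal in both by nilpotency. If `R ⊴ G`, the
images of `H` and `K` in `G/R` are conjugate by induction, and the conjugacy lifts because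
`R ≤ H ∩ K`; otherwise both lie in the proper subgroup `N_G(R)`, where induction applies.
-/

open Pointwise

namespace Subgroup

variable {G : Type*} [Group G]

structure IsHall (π : Set ℕ) (H : Subgroup G) : Prop where
  prime_mem_of_dvd_card : ∀ q : ℕ, q.Prime → q ∣ Nat.card H → q ∈ π
  prime_notMem_of_dvd_index : ∀ q : ℕ, q.Prime → q ∣ H.index → q ∉ π

namespace IsHall

variable {π : Set ℕ} {H K : Subgroup G}

theorem card_coprime_index (hH : H.IsHall π) (hK : K.IsHall π) :
    (Nat.card H).Coprime K.index :=
  Nat.coprime_of_dvd fun q hq hqH hqK =>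
    hK.prime_notMem_of_dvd_index q hq hqK (hH.prime_mem_of_dvd_card q hq hqH)

theorem card_eq [Finite G] (hH : H.IsHall π) (hK : K.IsHall π) : Nat.card H = Nat.card K :=
  Nat.dvd_antisymm
    ((hH.card_coprime_index hK).dvd_of_dvd_mul_right
      (K.card_mul_index ▸ H.card_subgroup_dvd_card))
    ((hK.card_coprime_index hH).dvd_of_dvd_mul_right
      (H.card_mul_index ▸ K.card_subgroup_dvd_card))

theorem map {G' : Type*} [Group G'] (hH : H.IsHall π) {f : G →* G'}
    (hf : Function.Surjective f) (hker : f.ker ≤ H) : (H.map f).IsHall π where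
  prime_mem_of_dvd_card q hq hdvd :=
    hH.prime_mem_of_dvd_card q hq (hdvd.trans (card_map_dvd H f))
  prime_notMem_of_dvd_index q hq hdvd :=
    hH.prime_notMem_of_dvd_index q hq (index_map_eq H hf hker ▸ hdvd)

theorem conj_smul (hH : H.IsHall π) (a : MulAut G) : (a • H).IsHall π :=
  hH.map (f := a.toMonoidHom) a.surjective
    (by rw [(MonoidHom.ker_eq_bot_iff _).mpr a.injective]; exact bot_le)

theorem subgroupOf (hH : H.IsHall π) {N : Subgroup G} (hHN : H ≤ N) :
    (H.subgroupOf N).IsHall π where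
  prime_mem_of_dvd_card q hq hdvd :=
    hH.prime_mem_of_dvd_card q hq (Nat.card_congr (subgroupOfEquivOfLe hHN).toEquiv ▸ hdvd)
  prime_notMem_of_dvd_index q hq hdvd :=
    hH.prime_notMem_of_dvd_index q hq (hdvd.trans (Dvd.intro _ (relIndex_mul_index hHN)))

end IsHall

instance isNilpotent_map {G' : Type*} [Group G'] (H : Subgroup G) [Group.IsNilpotent H]
    (f : G →* G') : Group.IsNilpotent (H.map f) :=
  Group.nilpotent_of_surjective _ (f.subgroupMap_surjective H)

instance isNilpotent_pointwise_smul {α : Type*} [Group α] [MulDistribMulAction α G] (a : α)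
    (H : Subgroup G) [Group.IsNilpotent H] : Group.IsNilpotent ↥(a • H) :=
  Group.nilpotent_of_mulEquiv (equivSMul a H)

theorem isNilpotent_subgroupOf_of_le {H N : Subgroup G} [Group.IsNilpotent H] (hHN : H ≤ N) :
    Group.IsNilpotent (H.subgroupOf N) :=
  Group.nilpotent_of_mulEquiv (subgroupOfEquivOfLe hHN).symm

theorem card_lt_card_of_ne_top [Finite G] {H : Subgroup G} (hH : H ≠ ⊤) :
    Nat.card H < Nat.card G :=
  (card_le_card_group H).lt_of_ne (mt (card_eq_iff_eq_top H).mp hH)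

theorem card_quotient_lt_card [Finite G] {N : Subgroup G} (hN : N ≠ ⊥) :
    Nat.card (G ⧸ N) < Nat.card G := by
  rw [← index_eq_card, ← N.index_mul_card]
  exact lt_mul_of_one_lt_right (Nat.pos_of_ne_zero index_ne_zero_of_finite)
    (N.one_lt_card_iff_ne_bot.mpr hN)

theorem exists_sylow_le_of_not_dvd_index [Finite G] {p : ℕ} [Fact p.Prime] {H : Subgroup G}
    (hp : ¬ p ∣ H.index) : ∃ P : Sylow p G, ↑P ≤ H := by
  obtain ⟨Q⟩ : Nonempty (Sylow p H) := inferInstance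
  have hQ : ¬ p ∣ ((Q : Subgroup H).map H.subtype).index := by
    rw [index_map_subtype]
    exact Nat.Prime.not_dvd_mul Fact.out Q.not_dvd_index hp
  exact ⟨(Q.2.map H.subtype).toSylow hQ, by simpa using map_subtype_le _⟩

theorem exists_sylow_le_conj_smul_and_le [Finite G] {p : ℕ} [Fact p.Prime] {H K : Subgroup G}
    (hpH : ¬ p ∣ H.index) (hpK : ¬ p ∣ K.index) :
    ∃ (g : G) (R : Sylow p G), ↑R ≤ MulAut.conj g • H ∧ ↑R ≤ K := by
  obtain ⟨P, hPH⟩ := exists_sylow_le_of_not_dvd_index hpH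
  obtain ⟨R, hRK⟩ := exists_sylow_le_of_not_dvd_index hpK
  obtain ⟨g, rfl⟩ := MulAction.exists_smul_eq G P R
  refine ⟨g, g • P, ?_, hRK⟩
  rw [Sylow.coe_subgroup_smul]
  exact pointwise_smul_le_pointwise_smul_iff.mpr hPH

theorem le_normalizer_sylow_of_isNilpotent [Finite G] {p : ℕ} [Fact p.Prime] {H : Subgroup G}
    [Group.IsNilpotent H] (P : Sylow p G) (hPH : ↑P ≤ H) : H ≤ normalizer (P : Set G) :=
  have hnormal := Sylow.normal_of_normalizerCondition Group.normalizerCondition_of_isNilpotent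
    (P.subtype hPH)
  have : ((P : Subgroup G).subgroupOf H).Normal := hnormal
  le_normalizer_of_normal_subgroupOf hPH

theorem map_conj_smul {G' : Type*} [Group G'] (f : G →* G') (g : G) (H : Subgroup G) :
    (MulAut.conj g • H).map f = MulAut.conj (f g) • H.map f := by
  simp only [pointwise_smul_def]
  ext x
  simp

theorem conj_smul_eq_of_subgroupOf {N H K : Subgroup G} (hHN : H ≤ N) (hKN : K ≤ N) {n : N}
    (h : MulAut.conj n • H.subgroupOf N = K.subgroupOf N) : MulAut.conj (n : G) • H = K := by
  rwa [conj_smul_subgroupOf hHN, subgroupOf_inj, inf_of_le_left (conj_smul_le_of_le hHN n),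
    inf_of_le_left hKN] at h

theorem conj_smul_eq_of_map_eq {G' : Type*} [Group G'] {f : G →* G'} {H K : Subgroup G}
    (hH : f.ker ≤ H) (hK : f.ker ≤ K) {g : G}
    (h : MulAut.conj (f g) • H.map f = K.map f) : MulAut.conj g • H = K := by
  refine map_injective_of_ker_le f ?_ hK (by rw [map_conj_smul, h])
  rw [← Normal.conj_smul_eq_self g f.ker]
  exact pointwise_smul_le_pointwise_smul_iff.mpr hH

theorem IsHall.exists_conj_smul_eq_of_isNilpotent [Finite G] {π : Set ℕ} {H K : Subgroup G}
    (hH : H.IsHall π) (hK : K.IsHall π) [Group.IsNilpotent H] [Group.IsNilpotent K] :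
    ∃ g : G, MulAut.conj g • H = K := by
  induction hn : Nat.card G using Nat.strong_induction_on generalizing G with
  | _ n ih =>
  subst hn
  obtain rfl | hHbot := eq_or_ne H ⊥
  · exact ⟨1, by rw [smul_bot, eq_comm, ← card_eq_one, ← hH.card_eq hK, card_bot]⟩
  obtain ⟨p, hp, hpH⟩ := Nat.exists_prime_and_dvd (mt card_eq_one.mp hHbot)
  have : Fact p.Prime := ⟨hp⟩
  have hpπ := hH.prime_mem_of_dvd_card p hp hpH
  obtain ⟨g, R, hRH, hRK⟩ := exists_sylow_le_conj_smul_and_le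
    (hH.prime_notMem_of_dvd_index p hp · hpπ) (hK.prime_notMem_of_dvd_index p hp · hpπ)
  suffices ∃ c : G, MulAut.conj c • MulAut.conj g • H = K by
    obtain ⟨c, hc⟩ := this
    exact ⟨c * g, by rw [map_mul, mul_smul, hc]⟩
  have hH' := hH.conj_smul (MulAut.conj g)
  have : Group.IsNilpotent ↥(MulAut.conj g • H) := inferInstance
  generalize MulAut.conj g • H = H' at hRH hH' this
  have hHN := le_normalizer_sylow_of_isNilpotent R hRH
  have hKN := le_normalizer_sylow_of_isNilpotent R hRK
  have hR : (R : Subgroup G) ≠ ⊥ := R.ne_bot_of_dvd_card (hpH.trans H.card_subgroup_dvd_card)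
  by_cases hRnormal : (R : Subgroup G).Normal
  · let f := QuotientGroup.mk' (R : Subgroup G)
    have hf : Function.Surjective f := QuotientGroup.mk'_surjective _
    have hkerR : f.ker ≤ R := (QuotientGroup.ker_mk' _).le
    obtain ⟨x, hx⟩ := ih _ (card_quotient_lt_card hR)
      (hH'.map hf (hkerR.trans hRH)) (hK.map hf (hkerR.trans hRK)) rfl
    obtain ⟨c, rfl⟩ := hf x
    exact ⟨c, conj_smul_eq_of_map_eq (hkerR.trans hRH) (hkerR.trans hRK) hx⟩
  · have := isNilpotent_subgroupOf_of_le hHN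
    have := isNilpotent_subgroupOf_of_le hKN
    obtain ⟨n, hn⟩ := ih _ (card_lt_card_of_ne_top (mt normalizer_eq_top_iff.mp hRnormal))
      (hH'.subgroupOf hHN) (hK.subgroupOf hKN) rfl
    exact ⟨n, conj_smul_eq_of_subgroupOf hHN hKN hn⟩

end Subgroup

/-- Wielandt: All nilpotent Hall `π`-subgroups of a finite group
are conjugate. -/
theorem stmt14 {G : Type*} [Group G] [Finite G] (π : Set ℕ)
    (H K : Subgroup G)
    (hHhall : (∀ q : ℕ, q.Prime → q ∣ Nat.card H → q ∈ π) ∧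
              (∀ q : ℕ, q.Prime → q ∣ H.index → q ∉ π))
    (hKhall : (∀ q : ℕ, q.Prime → q ∣ Nat.card K → q ∈ π) ∧
              (∀ q : ℕ, q.Prime → q ∣ K.index → q ∉ π))
    (hHnil : Group.IsNilpotent H) (hKnil : Group.IsNilpotent K) :
    ∃ g : G, H.map (MulAut.conj g).toMonoidHom = K :=
  Subgroup.IsHall.exists_conj_smul_eq_of_isNilpotent ⟨hHhall.1, hHhall.2⟩
    ⟨hKhall.1, hKhall.2⟩
end
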